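/- arXiv:2012.10368 — 4 statements merged into one kernel-verified Lean document; each statement's English description precedes it below -/
import Mathlib

section
/- Let n ≥ 2 be even and (α,β) ∈ Γ_n with α ≥ n² ≥ β. Then the squared L²(0,π)-norm of the normalized Fučík eigenfunction satisfies ‖f^n_{α,β}‖² = π/2 − π·n·(√α − n)/(2√α − n)². -/
open MeasureTheory Real Set Filter

noncomputable def L2normSq (f : ℝ → ℝ) : ℝ := ∫ x in Ioo (0:ℝ) π, (f x)^2

noncomputable def L2innerProd (f g : ℝ → ℝ) : ℝ := ∫ x in Ioo (0:ℝ) π, f x * g x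

/-- The Fučík spectral curve `Γ_n`. -/
def FucikCurve (n : ℕ) (a b : ℝ) : Prop :=
  1 < a ∧ 1 < b ∧
  (if Even n
    then ((n : ℝ)/2) * (π / Real.sqrt a) + ((n : ℝ)/2) * (π / Real.sqrt b) = π
    else (((n : ℝ)+1)/2) * (π / Real.sqrt a) + (((n : ℝ)-1)/2) * (π / Real.sqrt b) = π)

/-- The normalized Fučík eigenfunction `f^n_{a,b}`. -/
noncomputable def fucikEf (n : ℕ) (a b : ℝ) (x : ℝ) : ℝ :=
  if n = 1 then Real.sin x
  else
    let l1 := π / Real.sqrt a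
    let l2 := π / Real.sqrt b
    let l := l1 + l2
    let y := l * Int.fract (x / l)
    if (n : ℝ)^2 ≤ a then
      if y < l1 then (Real.sqrt b / Real.sqrt a) * Real.sin (Real.sqrt a * y)
      else - Real.sin (Real.sqrt b * (y - l1))
    else
      if y < l1 then Real.sin (Real.sqrt a * y)
      else - (Real.sqrt a / Real.sqrt b) * Real.sin (Real.sqrt b * (y - l1))

/-- A Fučík system, given by mappings `a b : ℕ → ℝ`. -/
structure FucikSystem (a b : ℕ → ℝ) : Prop where
  one_a : a 1 = 1
  one_b : b 1 = 1
  curve : ∀ n, 2 ≤ n → FucikCurve n (a n) (b n)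

/-- `{ψ_n}_{n ≥ 1}` is a Riesz basis of `L²(0,π)`: its span is dense and the two-sided
frame inequalities hold. -/
def IsRieszBasis (ψ : ℕ → ℝ → ℝ) : Prop :=
  (∀ g : ℝ → ℝ, MeasureTheory.MemLp g 2 (MeasureTheory.volume.restrict (Ioo (0:ℝ) π)) →
    ∀ ε : ℝ, 0 < ε → ∃ (N : ℕ) (s : ℕ → ℝ),
      L2normSq (fun x => g x - ∑ n ∈ Finset.Icc 1 N, s n * ψ n x) < ε) ∧
  (∃ c : ℝ, 0 < c ∧ ∃ C : ℝ, 0 < C ∧ ∀ (N : ℕ) (s : ℕ → ℝ),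
      c * ∑ n ∈ Finset.Icc 1 N, (s n)^2
        ≤ L2normSq (fun x => ∑ n ∈ Finset.Icc 1 N, s n * ψ n x) ∧
      L2normSq (fun x => ∑ n ∈ Finset.Icc 1 N, s n * ψ n x)
        ≤ C * ∑ n ∈ Finset.Icc 1 N, (s n)^2)

/-!
The eigenfunction is periodic with period `l = π/√α + π/√β`, and for even `n` the curve equation
says `π = (n/2)·l`, so `‖f‖²` is `n/2` times the integral of `f²` over one period. On the two arcs
of a period this is the integral of `sin²` over a half-period, giving `(β/α)·(π/√α)/2 + (π/√β)/2`.
The curve equation also gives `√β = n√α/(2√α - n)`, which turns this into the closed form.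
-/

theorem intervalIntegral_sin_mul_sq_of_mul_eq_pi {c L : ℝ} (hc : c ≠ 0) (hcL : c * L = π) :
    ∫ x in (0:ℝ)..L, sin (c * x) ^ 2 = L / 2 := by
  have hL : L = π / c := by rw [← hcL]; field_simp
  rw [intervalIntegral.integral_comp_mul_left (fun x => sin x ^ 2) hc, mul_zero, hcL,
    integral_sin_sq, hL]
  simp only [sin_zero, sin_pi, smul_eq_mul]
  field_simp
  ring

theorem mul_fract_div_eq_self_of_mem_Ico {l x : ℝ} (hx : x ∈ Ico 0 l) :
    l * Int.fract (x / l) = x := by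
  have hl : 0 < l := hx.1.trans_lt hx.2
  rw [Int.fract_eq_self.2 ⟨div_nonneg hx.1 hl.le, (div_lt_one hl).2 hx.2⟩, mul_div_cancel₀ x hl.ne']

theorem periodic_comp_mul_fract_div (P : ℝ → ℝ) {l : ℝ} (hl : l ≠ 0) :
    Function.Periodic (fun x => P (l * Int.fract (x / l))) l := fun x => by
  simp only [add_div, div_self hl, Int.fract_add_one]

theorem intervalIntegral_comp_mul_fract_div {P : ℝ → ℝ} {l : ℝ} (hl : 0 < l) :
    ∫ x in (0:ℝ)..l, P (l * Int.fract (x / l)) = ∫ x in (0:ℝ)..l, P x :=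
  intervalIntegral.integral_congr_uIoo fun x hx => by
    rw [uIoo_of_le hl.le] at hx
    rw [mul_fract_div_eq_self_of_mem_Ico (Ioo_subset_Ico_self hx)]

theorem intervalIntegral_comp_mul_fract_div_nat_mul {P : ℝ → ℝ} {l : ℝ} (hl : 0 < l)
    (hP : IntervalIntegrable P volume 0 l) (m : ℕ) :
    ∫ x in (0:ℝ)..m * l, P (l * Int.fract (x / l)) = m * ∫ x in (0:ℝ)..l, P x := by
  have hper := periodic_comp_mul_fract_div P hl.ne'
  have hint : IntervalIntegrable (fun x => P (l * Int.fract (x / l))) volume 0 (0 + l) := by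
    rw [zero_add]
    refine hP.congr_uIoo fun x hx => ?_
    rw [uIoo_of_le hl.le] at hx
    rw [mul_fract_div_eq_self_of_mem_Ico (Ioo_subset_Ico_self hx)]
  have h := hper.intervalIntegral_add_zsmul_eq m 0 (hper.intervalIntegrable hl.ne' hint)
  simpa [intervalIntegral_comp_mul_fract_div hl] using h

/-- One period `[0, π/s + π/t)` of `f^n_{α,β}` for `α ≥ n²`, where `s = √α` and `t = √β`. -/
noncomputable def fucikProfile (s t y : ℝ) : ℝ :=
  if y < π / s then t / s * sin (s * y) else -sin (t * (y - π / s))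

theorem fucikEf_eq_of_sq_le {n : ℕ} {a b : ℝ} (hn : n ≠ 1) (ha : (n:ℝ) ^ 2 ≤ a) :
    fucikEf n a b = fun x =>
      fucikProfile (√a) (√b) ((π / √a + π / √b) * Int.fract (x / (π / √a + π / √b))) := by
  funext x
  simp only [fucikEf, fucikProfile, if_neg hn, if_pos ha]

section fucikProfile

variable {s t : ℝ}

theorem eqOn_fucikProfile_sq_left (hs : 0 < s) :
    EqOn (fun y => fucikProfile s t y ^ 2) (fun y => (t / s) ^ 2 * sin (s * y) ^ 2)
      (Icc 0 (π / s)) := by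
  intro y hy
  rcases hy.2.lt_or_eq with hlt | rfl
  · simp only [fucikProfile, if_pos hlt]
    ring
  · simp [fucikProfile, mul_div_cancel₀ π hs.ne']

theorem eqOn_fucikProfile_sq_right :
    EqOn (fun y => fucikProfile s t y ^ 2) (fun y => sin (t * (y - π / s)) ^ 2) (Ici (π / s)) :=
  fun y hy => by simp only [fucikProfile, if_neg (not_lt.2 (mem_Ici.1 hy)), neg_sq]

theorem intervalIntegrable_fucikProfile_sq_left (hs : 0 < s) :
    IntervalIntegrable (fun y => fucikProfile s t y ^ 2) volume 0 (π / s) :=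
  ((by fun_prop : Continuous fun y => (t / s) ^ 2 * sin (s * y) ^ 2).intervalIntegrable _ _
    ).congr_uIoo fun y hy => by
    rw [uIoo_of_le (div_pos pi_pos hs).le] at hy
    exact (eqOn_fucikProfile_sq_left hs (Ioo_subset_Icc_self hy)).symm

theorem intervalIntegrable_fucikProfile_sq_right {c : ℝ} (hc : π / s ≤ c) :
    IntervalIntegrable (fun y => fucikProfile s t y ^ 2) volume (π / s) c :=
  ((by fun_prop : Continuous fun y => sin (t * (y - π / s)) ^ 2).intervalIntegrable _ _
    ).congr_uIoo fun y hy => by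
    rw [uIoo_of_le hc] at hy
    exact (eqOn_fucikProfile_sq_right (mem_Ici.2 hy.1.le)).symm

theorem intervalIntegral_fucikProfile_sq (hs : 0 < s) (ht : 0 < t) :
    ∫ y in (0:ℝ)..π / s + π / t, fucikProfile s t y ^ 2
      = (t / s) ^ 2 * (π / s / 2) + π / t / 2 := by
  have hc : π / s ≤ π / s + π / t := by linarith [div_pos pi_pos ht]
  rw [← intervalIntegral.integral_add_adjacent_intervals
      (intervalIntegrable_fucikProfile_sq_left hs) (intervalIntegrable_fucikProfile_sq_right hc),
    intervalIntegral.integral_congr (uIcc_of_le (by positivity : 0 ≤ π / s) ▸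
      eqOn_fucikProfile_sq_left hs),
    intervalIntegral.integral_congr
      (eqOn_fucikProfile_sq_right.mono (uIcc_of_le hc ▸ Icc_subset_Ici_self)),
    intervalIntegral.integral_const_mul,
    intervalIntegral.integral_comp_sub_right (fun y => sin (t * y) ^ 2), sub_self,
    add_sub_cancel_left,
    intervalIntegral_sin_mul_sq_of_mul_eq_pi hs.ne' (mul_div_cancel₀ π hs.ne'),
    intervalIntegral_sin_mul_sq_of_mul_eq_pi ht.ne' (mul_div_cancel₀ π ht.ne')]

end fucikProfile

theorem fucik_even_normSq_closed_form {n s t : ℝ} (hs : 0 < s) (ht : 0 < t)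
    (hcurve : n / 2 * (π / s) + n / 2 * (π / t) = π) :
    n / 2 * ((t / s) ^ 2 * (π / s / 2) + π / t / 2)
      = π / 2 - π * n * (s - n) / (2 * s - n) ^ 2 := by
  have hn : 0 < n := by
    have : 0 < n * (π / s + π / t) := by linarith [pi_pos]
    exact pos_of_mul_pos_left this (by positivity)
  have hrel : t * (2 * s - n) = n * s := by
    field_simp at hcurve
    nlinarith [pi_pos]
  have hpos : 0 < 2 * s - n := pos_of_mul_pos_right (hrel ▸ by positivity) ht.le
  obtain rfl : t = n * s / (2 * s - n) := (eq_div_iff hpos.ne').2 hrel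
  field_simp
  ring

theorem fucik_normSq_even_a_ge_general (n : ℕ) (hne : Even n) (a b : ℝ)
    (hΓ : FucikCurve n a b) (ha : (n:ℝ)^2 ≤ a) :
    L2normSq (fucikEf n a b)
      = π/2 - π*(n:ℝ)*(Real.sqrt a - (n:ℝ))/(2*Real.sqrt a - (n:ℝ))^2 := by
  obtain ⟨ha1, hb1, hcurve⟩ := hΓ
  rw [if_pos hne] at hcurve
  have hs : 0 < √a := sqrt_pos.2 (by linarith)
  have ht : 0 < √b := sqrt_pos.2 (by linarith)
  have hl : 0 < π / √a + π / √b := by positivity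
  obtain ⟨m, rfl⟩ := hne
  have hperiods : (m:ℝ) * (π / √a + π / √b) = π := by push_cast at hcurve; linarith
  have hint : IntervalIntegrable (fun y => fucikProfile √a √b y ^ 2) volume 0 (π / √a + π / √b) :=
    (intervalIntegrable_fucikProfile_sq_left hs).trans
      (intervalIntegrable_fucikProfile_sq_right (by linarith [div_pos pi_pos ht]))
  have h := intervalIntegral_comp_mul_fract_div_nat_mul hl hint m
  rw [hperiods, intervalIntegral_fucikProfile_sq hs ht] at h
  rw [L2normSq, fucikEf_eq_of_sq_le (by omega) ha, ← integral_Ioc_eq_integral_Ioo,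
    ← intervalIntegral.integral_of_le pi_pos.le, h, ← fucik_even_normSq_closed_form hs ht hcurve]
  push_cast
  ring

theorem fucik_normSq_even_a_ge (n : ℕ) (hn : 2 ≤ n) (hne : Even n) (a b : ℝ)
    (hΓ : FucikCurve n a b) (ha : (n:ℝ)^2 ≤ a) (hb : b ≤ (n:ℝ)^2) :
    L2normSq (fucikEf n a b)
      = π/2 - π*(n:ℝ)*(Real.sqrt a - (n:ℝ))/(2*Real.sqrt a - (n:ℝ))^2 :=
  fucik_normSq_even_a_ge_general n hne a b hΓ ha
end

section
/- Let n ≥ 3 be odd and (α,β) ∈ Γ_n with α ≥ n² ≥ β. Then ‖f^n_{α,β}‖² = π/2 − π·(n+1)·(√α − 1)·(√α − n)/(√α·(2√α − (n+1))²). -/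
open MeasureTheory Real Set Filter

/-!
On `[0, π]` the eigenfunction for `n = 2m + 1` is `m` full periods followed by one positive hump:
`m + 1` positive humps `(√β/√α) sin (√α y)` of length `π/√α` and `m` negative humps `sin (√β y)` of
length `π/√β`. A hump `c sin (k y)` over a half period contributes `c² π / (2k)` to the squared norm.
The curve equation `(m + 1)/√α + m/√β = 1` gives `√β = m √α / (√α - (m + 1))`, and substituting
this into the sum of the hump contributions yields the closed form.
-/

lemma mul_fract_div_of_mem_Ico {K : Type*} [Field K] [LinearOrder K] [IsStrictOrderedRing K]
    [FloorRing K] {l x : K} (hx : x ∈ Ico 0 l) : l * Int.fract (x / l) = x := by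
  have hl : 0 < l := hx.1.trans_lt hx.2
  rw [Int.fract_eq_self.2 ⟨div_nonneg hx.1 hl.le, (div_lt_one hl).2 hx.2⟩, mul_div_cancel₀ _ hl.ne']

lemma integral_sin_mul_sq {c : ℝ} (hc : c ≠ 0) :
    ∫ x in 0..π / c, sin (c * x) ^ 2 = π / (2 * c) := by
  rw [intervalIntegral.integral_comp_mul_left (fun x => sin x ^ 2) hc, mul_zero,
    mul_div_cancel₀ _ hc, integral_sin_sq]
  simp only [sin_zero, cos_zero, sin_pi, cos_pi, mul_neg, mul_one, sub_zero, smul_eq_mul]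
  ring

namespace Fucik

/-- `fucikEf n α β` for `α ≥ n²`, written in terms of `s = √α` and `t = √β`. -/
noncomputable def profile (s t x : ℝ) : ℝ :=
  let l := π / s + π / t
  let y := l * Int.fract (x / l)
  if y < π / s then (t / s) * sin (s * y) else - sin (t * (y - π / s))

lemma fucikEf_eq_profile {n : ℕ} (hn : n ≠ 1) {a : ℝ} (b : ℝ) (ha : (n : ℝ) ^ 2 ≤ a) :
    fucikEf n a b = profile (√a) (√b) := by
  funext x
  simp only [fucikEf, profile, if_neg hn, if_pos ha]

lemma profile_periodic (s t : ℝ) : Function.Periodic (profile s t) (π / s + π / t) := by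
  intro x
  rcases eq_or_ne (π / s + π / t) 0 with hl | hl
  · simp [hl]
  · simp only [profile, add_div, div_self hl, Int.fract_add_one]

variable {s t : ℝ}

lemma profile_of_mem_Icc_left (hs : 0 < s) (ht : 0 < t) {x : ℝ} (hx : x ∈ Icc 0 (π / s)) :
    profile s t x = (t / s) * sin (s * x) := by
  have hlt : x < π / s + π / t := hx.2.trans_lt (lt_add_of_pos_right _ (by positivity))
  simp only [profile, mul_fract_div_of_mem_Ico ⟨hx.1, hlt⟩]
  split_ifs with h
  · rfl
  · obtain rfl : x = π / s := le_antisymm hx.2 (not_lt.1 h)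
    simp [mul_div_cancel₀ _ hs.ne']

lemma profile_of_mem_Icc_right (hs : 0 < s) (ht : 0 < t) {x : ℝ}
    (hx : x ∈ Icc (π / s) (π / s + π / t)) :
    profile s t x = - sin (t * (x - π / s)) := by
  rcases hx.2.lt_or_eq with hlt | rfl
  · have hx0 : 0 ≤ x := le_trans (by positivity) hx.1
    simp only [profile, mul_fract_div_of_mem_Ico ⟨hx0, hlt⟩, if_neg (not_lt.2 hx.1)]
  · have hl : π / s + π / t ≠ 0 := by positivity
    simp [profile, div_self hl, mul_div_cancel₀ _ ht.ne', show (0:ℝ) < π / s by positivity]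

lemma integral_profile_sq_left (hs : 0 < s) (ht : 0 < t) :
    ∫ x in 0..π / s, profile s t x ^ 2 = (t / s) ^ 2 * (π / (2 * s)) := by
  rw [intervalIntegral.integral_congr (g := fun x => (t / s) ^ 2 * sin (s * x) ^ 2),
    intervalIntegral.integral_const_mul, integral_sin_mul_sq hs.ne']
  intro x hx
  rw [uIcc_of_le (by positivity)] at hx
  simp only [profile_of_mem_Icc_left hs ht hx, mul_pow]

lemma integral_profile_sq_right (hs : 0 < s) (ht : 0 < t) :
    ∫ x in π / s..π / s + π / t, profile s t x ^ 2 = π / (2 * t) := by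
  rw [intervalIntegral.integral_congr (g := fun x => sin (t * (x - π / s)) ^ 2),
    intervalIntegral.integral_comp_sub_right (fun x => sin (t * x) ^ 2), sub_self,
    add_sub_cancel_left, integral_sin_mul_sq ht.ne']
  intro x hx
  rw [uIcc_of_le (by linarith [show 0 < π / t by positivity])] at hx
  simp only [profile_of_mem_Icc_right hs ht hx, neg_sq]

lemma intervalIntegrable_profile_sq (hs : 0 < s) (ht : 0 < t) (a b : ℝ) :
    IntervalIntegrable (fun x => profile s t x ^ 2) volume a b := by
  refine ((profile_periodic s t).comp (· ^ 2)).intervalIntegrable₀ (by positivity) ?_ a b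
  have hl1 : 0 ≤ π / s := by positivity
  have hl2 : π / s ≤ π / s + π / t := le_add_of_nonneg_right (by positivity)
  refine IntervalIntegrable.trans (b := π / s) ?_ ?_
  · refine ((by fun_prop : Continuous fun x => ((t / s) * sin (s * x)) ^ 2).continuousOn.congr
      fun x hx => ?_).intervalIntegrable
    rw [uIcc_of_le hl1] at hx
    simp only [Function.comp_apply, profile_of_mem_Icc_left hs ht hx]
  · refine ((by fun_prop : Continuous fun x => (- sin (t * (x - π / s))) ^ 2).continuousOn.congr
      fun x hx => ?_).intervalIntegrable
    rw [uIcc_of_le hl2] at hx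
    simp only [Function.comp_apply, profile_of_mem_Icc_right hs ht hx]

lemma integral_profile_sq_natCast_mul_add (hs : 0 < s) (ht : 0 < t) (m : ℕ) :
    ∫ x in 0..m * (π / s + π / t) + π / s, profile s t x ^ 2
      = (m + 1) * ((t / s) ^ 2 * (π / (2 * s))) + m * (π / (2 * t)) := by
  have hint := intervalIntegrable_profile_sq hs ht
  have hper : Function.Periodic (fun x => profile s t x ^ 2) (π / s + π / t) :=
    fun x => congrArg (· ^ 2) (profile_periodic s t x)
  have hperiod : ∫ x in π / s..π / s + (m : ℤ) • (π / s + π / t), profile s t x ^ 2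
      = m * ((t / s) ^ 2 * (π / (2 * s)) + π / (2 * t)) := by
    rw [hper.intervalIntegral_add_zsmul_eq m _ hint, hper.intervalIntegral_add_eq _ 0, zero_add,
      ← intervalIntegral.integral_add_adjacent_intervals (hint 0 (π / s)) (hint _ _),
      integral_profile_sq_left hs ht, integral_profile_sq_right hs ht,
      zsmul_eq_mul, Int.cast_natCast]
  rw [← intervalIntegral.integral_add_adjacent_intervals (hint 0 (π / s)) (hint _ _),
    integral_profile_sq_left hs ht, add_comm _ (π / s), ← Int.cast_natCast, ← zsmul_eq_mul,
    hperiod]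
  push_cast
  ring

lemma sum_hump_energies_eq {m s t : ℝ} (hm : 0 < m) (hs : m + 1 < s) (ht : 0 < t)
    (hcurve : (m + 1) / s + m / t = 1) :
    (m + 1) * ((t / s) ^ 2 * (π / (2 * s))) + m * (π / (2 * t))
      = π / 2 - π * ((2 * m + 1) + 1) * (s - 1) * (s - (2 * m + 1))
          / (s * (2 * s - ((2 * m + 1) + 1)) ^ 2) := by
  have hs0 : 0 < s := by linarith
  have ht_eq : t = m * s / (s - (m + 1)) := by
    field_simp at hcurve
    rw [eq_div_iff (by linarith)]
    linarith
  have h : s - (m + 1) ≠ 0 := by linarith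
  subst ht_eq
  rw [show 2 * s - ((2 * m + 1) + 1) = 2 * (s - (m + 1)) by ring]
  field_simp
  ring

end Fucik

open Fucik

lemma L2normSq_eq_intervalIntegral (f : ℝ → ℝ) : L2normSq f = ∫ x in 0..π, f x ^ 2 := by
  rw [L2normSq, intervalIntegral.integral_of_le pi_pos.le, integral_Ioc_eq_integral_Ioo]

theorem fucik_normSq_odd_a_ge_general (n : ℕ) (hn : 3 ≤ n) (hno : Odd n) (a b : ℝ)
    (hΓ : FucikCurve n a b) (ha : (n:ℝ)^2 ≤ a) :
    L2normSq (fucikEf n a b)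
      = π/2 - π*((n:ℝ)+1)*(Real.sqrt a - 1)*(Real.sqrt a - (n:ℝ))
          /(Real.sqrt a*(2*Real.sqrt a - ((n:ℝ)+1))^2) := by
  obtain ⟨m, rfl⟩ := hno
  obtain ⟨-, hb, hcurve⟩ := hΓ
  rw [if_neg (Nat.not_even_iff_odd.2 (odd_two_mul_add_one m))] at hcurve
  push_cast at hcurve ha ⊢
  have hs : 2 * (m : ℝ) + 1 ≤ √a := Real.le_sqrt_of_sq_le ha
  have hm : (1 : ℝ) ≤ m := by exact_mod_cast (by omega : 1 ≤ m)
  have ht : 0 < √b := Real.sqrt_pos.2 (by linarith)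
  have hπ : π = m * (π / √a + π / √b) + π / √a := by linarith
  have hnorm := integral_profile_sq_natCast_mul_add (s := √a) (by linarith) ht m
  rw [← hπ] at hnorm
  rw [L2normSq_eq_intervalIntegral, fucikEf_eq_profile (by omega) b (by exact_mod_cast ha), hnorm]
  refine sum_hump_energies_eq (by linarith) (by linarith) ht (mul_left_cancel₀ pi_ne_zero ?_)
  linear_combination hcurve

theorem fucik_normSq_odd_a_ge (n : ℕ) (hn : 3 ≤ n) (hno : Odd n) (a b : ℝ)
    (hΓ : FucikCurve n a b) (ha : (n:ℝ)^2 ≤ a) (hb : b ≤ (n:ℝ)^2) :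
    L2normSq (fucikEf n a b)
      = π/2 - π*((n:ℝ)+1)*(Real.sqrt a - 1)*(Real.sqrt a - (n:ℝ))
          /(Real.sqrt a*(2*Real.sqrt a - ((n:ℝ)+1))^2) :=
  fucik_normSq_odd_a_ge_general n hn hno a b hΓ ha
end

section
/- Let n ≥ 2 be even and (α,β) ∈ Γ_n with β > n² > α. Then ‖f^n_{α,β} − φ_n‖² = π − π·n·(√β − n)/(2√β − n)² − (4β²/((2√β − n)(3√β − n)(√β + n)))·sin(nπ/√β)/(√β − n). -/
open MeasureTheory Real Set Filter

/-!
The squared difference `(f^n_{α,β} - φ_n)²` is periodic with period `l = l₁ + l₂`, and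
`π = (n/2) l`, so `‖f^n_{α,β} - φ_n‖²` is `n/2` times its integral over one period. On `[0, l₁]`
the integrand is `(sin (√α x) - sin (n x))²`, and the reflection `x ↦ l - x` turns `[l₁, l]` into
`[0, l₂]` with integrand `((√α/√β) sin (√β x) - sin (n x))²`. Both integrals are elementary, and
because `n l = 2π` the phases `nπ/√α` and `-nπ/√β` agree modulo `2π`. Eliminating
`√α = n√β / (2√β - n)` gives the closed form.
-/

lemma integral_cos_mul {k : ℝ} (hk : k ≠ 0) (B : ℝ) :
    ∫ x in (0:ℝ)..B, cos (k * x) = sin (k * B) / k := by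
  rw [intervalIntegral.integral_comp_mul_left (fun x => cos x) hk, integral_cos, mul_zero,
    sin_zero, sub_zero, smul_eq_mul, inv_mul_eq_div]

lemma integral_mul_sin_sub_sin_sq {ω ν : ℝ} (hω : ω ≠ 0) (hν : ν ≠ 0) (hsub : ω - ν ≠ 0)
    (hadd : ω + ν ≠ 0) (c : ℝ) :
    ∫ x in (0:ℝ)..π / ω, (c * sin (ω * x) - sin (ν * x)) ^ 2
      = (c ^ 2 + 1) * π / (2 * ω) - sin (2 * ν * π / ω) / (4 * ν)
        - 2 * c * ω * sin (ν * π / ω) / (ω ^ 2 - ν ^ 2) := by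
  have hexpand : ∀ x, (c * sin (ω * x) - sin (ν * x)) ^ 2
      = (c ^ 2 + 1) / 2 - c ^ 2 / 2 * cos (2 * ω * x) - 1 / 2 * cos (2 * ν * x)
        - c * cos ((ω - ν) * x) + c * cos ((ω + ν) * x) := by
    intro x
    rw [mul_assoc 2 ω, mul_assoc 2 ν, cos_two_mul, cos_two_mul, sub_mul, add_mul, cos_sub, cos_add]
    linear_combination c ^ 2 * sin_sq_add_cos_sq (ω * x) + sin_sq_add_cos_sq (ν * x)
  simp (disch := exact Continuous.intervalIntegrable (by fun_prop) _ _) only [hexpand,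
    intervalIntegral.integral_add, intervalIntegral.integral_sub,
    intervalIntegral.integral_const_mul, intervalIntegral.integral_const, smul_eq_mul]
  rw [integral_cos_mul (mul_ne_zero two_ne_zero hω), integral_cos_mul (mul_ne_zero two_ne_zero hν),
    integral_cos_mul hsub, integral_cos_mul hadd]
  have h2π : 2 * ω * (π / ω) = 2 * π := by field_simp
  have hsub' : (ω - ν) * (π / ω) = π - ν * π / ω := by field_simp
  have hadd' : (ω + ν) * (π / ω) = ν * π / ω + π := by field_simp; ring
  rw [h2π, hsub', hadd', sin_two_pi, sin_pi_sub, sin_add_pi]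
  have hsq : ω ^ 2 - ν ^ 2 ≠ 0 := by
    rw [sq_sub_sq]; exact mul_ne_zero hadd hsub
  field_simp
  ring

lemma integral_neg_mul_sin_sub_sin_sq_reflect {s ν t : ℝ} (hs : s ≠ 0)
    (hν : ν * (t + π / s) = 2 * π) (c : ℝ) :
    ∫ x in t..t + π / s, (-c * sin (s * (x - t)) - sin (ν * x)) ^ 2
      = ∫ x in 0..π / s, (c * sin (s * x) - sin (ν * x)) ^ 2 := by
  have h := intervalIntegral.integral_comp_sub_left
    (fun x => (-c * sin (s * (x - t)) - sin (ν * x)) ^ 2) (t + π / s) (a := 0) (b := π / s)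
  rw [add_sub_cancel_right, sub_zero] at h
  rw [← h]
  congr 1 with x
  have h1 : s * (t + π / s - x - t) = π - s * x := by field_simp; ring
  have h2 : ν * (t + π / s - x) = -(ν * x) + 2 * π := by linear_combination hν
  rw [h1, h2, sin_pi_sub, sin_add_two_pi, sin_neg]
  ring

lemma integral_Ioo_eq_nat_mul_of_periodic {g : ℝ → ℝ} {T : ℝ} (hg : Function.Periodic g T)
    (hT : 0 < T) (hint : IntervalIntegrable g volume 0 T) {m : ℕ} {c : ℝ} (hc : m * T = c) :
    ∫ x in Ioo 0 c, g x = m * ∫ x in 0..T, g x := by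
  have hc0 : 0 ≤ c := hc ▸ by positivity
  have := hg.intervalIntegral_add_zsmul_eq m 0 (hg.intervalIntegrable₀ hT.ne' hint)
  rwa [zero_add, zero_add, zsmul_eq_mul, zsmul_eq_mul, Int.cast_natCast, hc,
    intervalIntegral.integral_of_le hc0, integral_Ioc_eq_integral_Ioo] at this

lemma fucikEf_periodic {n : ℕ} (hn : n ≠ 1) (a b : ℝ) :
    Function.Periodic (fucikEf n a b) (π / √a + π / √b) := by
  intro x
  rcases eq_or_ne (π / √a + π / √b) 0 with hl | hl
  · rw [hl, add_zero]
  · have h : (x + (π / √a + π / √b)) / (π / √a + π / √b) = x / (π / √a + π / √b) + 1 := by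
      rw [add_div, div_self hl]
    simp only [fucikEf, if_neg hn, h, Int.fract_add_one]

lemma fucikEf_of_mem_Ico {n : ℕ} (hn : n ≠ 1) {a b x : ℝ} (ha : a < n ^ 2)
    (hx : x ∈ Ico 0 (π / √a + π / √b)) :
    fucikEf n a b x = if x < π / √a then sin (√a * x)
      else -(√a / √b) * sin (√b * (x - π / √a)) := by
  have hl : 0 < π / √a + π / √b := hx.1.trans_lt hx.2
  have hy : (π / √a + π / √b) * Int.fract (x / (π / √a + π / √b)) = x := by
    rw [Int.fract_eq_self.mpr ⟨div_nonneg hx.1 hl.le, (div_lt_one hl).mpr hx.2⟩,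
      mul_div_cancel₀ _ hl.ne']
  simp only [fucikEf, if_neg hn, if_neg ha.not_ge, hy]

lemma fucikEf_eqOn_left {n : ℕ} (hn : n ≠ 1) {a b : ℝ} (ha : a < n ^ 2) :
    EqOn (fucikEf n a b) (fun x => sin (√a * x)) (Ioo 0 (π / √a)) := fun x hx => by
  have hxl : x < π / √a + π / √b := hx.2.trans_le (le_add_of_nonneg_right (by positivity))
  rw [fucikEf_of_mem_Ico hn ha ⟨hx.1.le, hxl⟩, if_pos hx.2]

lemma fucikEf_eqOn_right {n : ℕ} (hn : n ≠ 1) {a b : ℝ} (ha : a < n ^ 2) :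
    EqOn (fucikEf n a b) (fun x => -(√a / √b) * sin (√b * (x - π / √a)))
      (Ioo (π / √a) (π / √a + π / √b)) := fun x hx => by
  have hx0 : 0 ≤ x := (div_nonneg pi_pos.le (sqrt_nonneg a)).trans hx.1.le
  rw [fucikEf_of_mem_Ico hn ha ⟨hx0, hx.2⟩, if_neg hx.1.not_gt]

lemma integral_fucikEf_sub_sin_sq_period_split {n : ℕ} (hn : n ≠ 1) {a b : ℝ} (ha : a < n ^ 2)
    (hb : 0 < b) (hcurve : n * (π / √a + π / √b) = 2 * π) :
    IntervalIntegrable (fun x => (fucikEf n a b x - sin (n * x)) ^ 2) volume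
        0 (π / √a + π / √b) ∧
      ∫ x in 0..π / √a + π / √b, (fucikEf n a b x - sin (n * x)) ^ 2
        = (∫ x in 0..π / √a, (sin (√a * x) - sin (n * x)) ^ 2)
          + ∫ x in 0..π / √b, (√a / √b * sin (√b * x) - sin (n * x)) ^ 2 := by
  have hl1 : 0 ≤ π / √a := by positivity
  have hl2 : 0 ≤ π / √b := by positivity
  have hleft : EqOn (fun x => (fucikEf n a b x - sin (n * x)) ^ 2)
      (fun x => (sin (√a * x) - sin (n * x)) ^ 2) (uIoo 0 (π / √a)) := fun x hx => by
    rw [uIoo_of_le hl1] at hx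
    simp only [fucikEf_eqOn_left hn ha hx]
  have hright : EqOn (fun x => (fucikEf n a b x - sin (n * x)) ^ 2)
      (fun x => (-(√a / √b) * sin (√b * (x - π / √a)) - sin (n * x)) ^ 2)
      (uIoo (π / √a) (π / √a + π / √b)) := fun x hx => by
    rw [uIoo_of_le (le_add_of_nonneg_right hl2)] at hx
    simp only [fucikEf_eqOn_right hn ha hx]
  have hint1 := (Continuous.intervalIntegrable (μ := volume) (by fun_prop) _ _).congr_uIoo
    hleft.symm
  have hint2 := (Continuous.intervalIntegrable (μ := volume) (by fun_prop) _ _).congr_uIoo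
    hright.symm
  refine ⟨hint1.trans hint2, ?_⟩
  rw [← intervalIntegral.integral_add_adjacent_intervals hint1 hint2,
    intervalIntegral.integral_congr_uIoo hleft, intervalIntegral.integral_congr_uIoo hright,
    integral_neg_mul_sin_sub_sin_sq_reflect (sqrt_pos.2 hb).ne' hcurve]

lemma integral_sin_sub_sin_sq_add_integral_mul_sin_sub_sin_sq {σ s ν : ℝ} (hσ : 0 < σ)
    (hσν : σ < ν) (hνs : ν < s) (hcurve : ν * (π / σ + π / s) = 2 * π) :
    (∫ x in 0..π / σ, (sin (σ * x) - sin (ν * x)) ^ 2)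
        + ∫ x in 0..π / s, (σ / s * sin (s * x) - sin (ν * x)) ^ 2
      = π / σ + π / (2 * s) * (1 + σ ^ 2 / s ^ 2)
        + 2 * σ * sin (ν * π / s) * (1 / (σ ^ 2 - ν ^ 2) - 1 / (s ^ 2 - ν ^ 2)) := by
  have hν : 0 < ν := hσ.trans hσν
  have hs : 0 < s := hν.trans hνs
  have hleft := integral_mul_sin_sub_sin_sq hσ.ne' hν.ne' (by linarith) (by linarith) 1
  simp only [one_mul, one_pow] at hleft
  have hθ : ν * π / σ = -(ν * π / s) + 2 * π := by
    field_simp; field_simp at hcurve; linear_combination hcurve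
  have h2θ : 2 * ν * π / σ = -(2 * ν * π / s) + 2 * π + 2 * π := by
    linear_combination 2 * hθ
  rw [hleft, integral_mul_sin_sub_sin_sq hs.ne' hν.ne' (by linarith) (by linarith), hθ, h2θ,
    sin_add_two_pi, sin_add_two_pi, sin_add_two_pi, sin_neg, sin_neg]
  field_simp
  ring

lemma half_mul_fucik_period_integral {σ s ν : ℝ} (hσ : 0 < σ) (hσν : σ < ν) (hνs : ν < s)
    (hcurve : ν * (π / σ + π / s) = 2 * π) :
    ν / 2 * (π / σ + π / (2 * s) * (1 + σ ^ 2 / s ^ 2)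
        + 2 * σ * sin (ν * π / s) * (1 / (σ ^ 2 - ν ^ 2) - 1 / (s ^ 2 - ν ^ 2)))
      = π - π * ν * (s - ν) / (2 * s - ν) ^ 2
        - (4 * (s ^ 2) ^ 2 / ((2 * s - ν) * (3 * s - ν) * (s + ν)))
          * (sin (ν * π / s) / (s - ν)) := by
  have hs : 0 < s := by linarith
  have hσ_eq : σ = ν * s / (2 * s - ν) := by
    rw [eq_div_iff (by linarith)]
    field_simp at hcurve
    linear_combination -hcurve
  have hd1 : σ ^ 2 - ν ^ 2 ≠ 0 := by nlinarith
  have hd2 : s ^ 2 - ν ^ 2 ≠ 0 := by nlinarith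
  have hd3 : s - ν ≠ 0 := by linarith
  have hd4 : 2 * s - ν ≠ 0 := by linarith
  have hd5 : s * 3 - ν ≠ 0 := by linarith
  have hd6 : s + ν ≠ 0 := by linarith
  field_simp
  rw [hσ_eq]
  field_simp
  ring

theorem fucik_distSq_even_b_gt (n : ℕ) (hn : 2 ≤ n) (hne : Even n) (a b : ℝ)
    (hΓ : FucikCurve n a b) (hb : (n:ℝ)^2 < b) (ha : a < (n:ℝ)^2) :
    L2normSq (fun x => fucikEf n a b x - Real.sin ((n:ℝ)*x))
      = π - π*(n:ℝ)*(Real.sqrt b - (n:ℝ))/(2*Real.sqrt b - (n:ℝ))^2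
        - (4*b^2/((2*Real.sqrt b - (n:ℝ))*(3*Real.sqrt b - (n:ℝ))*(Real.sqrt b + (n:ℝ))))
          * (Real.sin ((n:ℝ)*π/Real.sqrt b)/(Real.sqrt b - (n:ℝ))) := by
  obtain ⟨ha1, -, hcurve⟩ := hΓ
  rw [if_pos hne] at hcurve
  have hn1 : n ≠ 1 := by omega
  have hn0 : (0 : ℝ) < n := by exact_mod_cast (by omega : 0 < n)
  have hb0 : 0 < b := (sq_pos_of_pos hn0).trans hb
  have hσn : √a < n := (sqrt_lt' hn0).mpr ha
  have hns : n < √b := (lt_sqrt hn0.le).mpr hb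
  have hperiod : n * (π / √a + π / √b) = 2 * π := by linear_combination 2 * hcurve
  obtain ⟨hint, hsplit⟩ := integral_fucikEf_sub_sin_sq_period_split hn1 ha hb0 hperiod
  have hsin : Function.Periodic (fun x => sin (n * x)) (π / √a + π / √b) := fun x => by
    simp only [mul_add, hperiod, sin_add_two_pi]
  have hdiff : Function.Periodic (fun x => (fucikEf n a b x - sin (n * x)) ^ 2)
      (π / √a + π / √b) := ((fucikEf_periodic hn1 a b).sub hsin).comp (· ^ 2)
  obtain ⟨m, hm⟩ := hne
  have hm_half : (m : ℝ) = n / 2 := by rw [hm]; push_cast; ring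
  rw [L2normSq, integral_Ioo_eq_nat_mul_of_periodic hdiff (by positivity) hint
      (by rw [hm_half]; linear_combination hcurve), hsplit,
    integral_sin_sub_sin_sq_add_integral_mul_sin_sub_sin_sq (by positivity) hσn hns hperiod,
    hm_half, half_mul_fucik_period_integral (by positivity) hσn hns hperiod, sq_sqrt hb0.le]
end

section
/- For each k ∈ ℕ, the map T_k : L²(0,π) → L²(0,π) defined by (T_k g)(x) = g*(kx/2) is a bounded linear operator whose operator norm equals 1 if k is even and √(1 + 1/k) (i.e., √((2m+2)/(2m+1)) for k = 2m+1) if k is odd. -/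
open MeasureTheory Real Set Filter

/-- The antiperiodic extension `g*` of a function `g` defined on `(0,π)`. -/
noncomputable def antiperExt (g : ℝ → ℝ) (x : ℝ) : ℝ :=
  (-1 : ℝ) ^ ⌊x / π⌋ * g (x - π * (⌊x / π⌋ : ℤ))

/-- The dilation operator `T_k g (x) = g*(k x / 2)`. -/
noncomputable def Tk (k : ℕ) (g : ℝ → ℝ) (x : ℝ) : ℝ := antiperExt g ((k : ℝ) * x / 2)


/-! Substituting `y = k x / 2` gives `‖T_k g‖² = (2 / k) ∫₀^{kπ/2} (g*)²`, and `(g*)²` is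
`π`-periodic with `∫₀^π (g*)² = ‖g‖²`. For `k = 2m` the integral runs over `m` full periods, so
`T_k` is an isometry. For `k = 2m + 1` it runs over `m` periods and the half period `(0, π/2)`, so
`‖T_k g‖² = (2 / k) (m ‖g‖² + ∫₀^{π/2} g²) ≤ (1 + 1 / k) ‖g‖²`, with equality for the indicator
of `(0, π/2)`. -/

open intervalIntegral

theorem Function.Periodic.intervalIntegral_nsmul_add {E : Type*} [NormedAddCommGroup E]
    [NormedSpace ℝ E] {f : ℝ → E} {T : ℝ} (hf : Function.Periodic f T)
    (h_int : ∀ a b, IntervalIntegrable f volume a b) (m : ℕ) (t : ℝ) :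
    ∫ x in (0:ℝ)..m • T + t, f x = m • (∫ x in (0:ℝ)..T, f x) + ∫ x in (0:ℝ)..t, f x := by
  have h_shift : ∫ x in m • T..m • T + t, f x = ∫ x in (0:ℝ)..t, f x := by
    have h := integral_comp_add_left f (m • T) (a := 0) (b := t)
    rw [add_zero] at h
    rw [← h]
    congr 1 with x
    rw [add_comm, hf.nsmul m x]
  have h_periods : ∫ x in (0:ℝ)..m • T, f x = m • ∫ x in (0:ℝ)..T, f x := by
    simpa using hf.intervalIntegral_add_zsmul_eq m 0 h_int
  rw [← integral_add_adjacent_intervals (h_int 0 (m • T)) (h_int _ _), h_shift, h_periods]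

lemma isLUB_sqrt_div_sqrt {α : Type*} {P : α → Prop} {N M : α → ℝ} {d : ℝ}
    (hle : ∀ a, P a → N a ≤ d * M a) {a₀ : α} (hP₀ : P a₀) (hM₀ : 0 < M a₀)
    (hN₀ : N a₀ = d * M a₀) :
    IsLUB {r : ℝ | ∃ a, P a ∧ M a ≠ 0 ∧ r = √(N a) / √(M a)} (√d) := by
  refine ⟨?_, fun r hr => hr ⟨a₀, hP₀, hM₀.ne', ?_⟩⟩
  · rintro r ⟨a, ha, -, rfl⟩
    rcases le_or_gt (M a) 0 with hM | hM
    · simp [Real.sqrt_eq_zero'.2 hM, Real.sqrt_nonneg]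
    · rw [div_le_iff₀ (Real.sqrt_pos.2 hM), ← Real.sqrt_mul' d hM.le]
      exact Real.sqrt_le_sqrt (hle a ha)
  · rw [hN₀, Real.sqrt_mul' d hM₀.le, mul_div_cancel_right₀ _ (Real.sqrt_pos.2 hM₀).ne']

section antiperExt

variable {g : ℝ → ℝ}

lemma antiperExt_antiperiodic (g : ℝ → ℝ) : Function.Antiperiodic (antiperExt g) π := by
  intro x
  have h_floor : ⌊(x + π) / π⌋ = ⌊x / π⌋ + 1 := by
    rw [add_div, div_self pi_ne_zero, Int.floor_add_one]
  simp only [antiperExt, h_floor, zpow_add_one₀ (by norm_num : (-1:ℝ) ≠ 0)]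
  push_cast
  ring_nf

lemma antiperExt_sq_periodic (g : ℝ → ℝ) : Function.Periodic (fun x => antiperExt g x ^ 2) π := by
  intro x
  simp only [antiperExt_antiperiodic g x, neg_sq]

lemma antiperExt_eq_of_mem_Ico {j : ℤ} {x : ℝ} (hx : x ∈ Ico (j * π) ((j + 1) * π)) :
    antiperExt g x = (-1) ^ j * g (x - j * π) := by
  have h_floor : ⌊x / π⌋ = j := Int.floor_eq_iff.2
    ⟨(le_div_iff₀ pi_pos).2 hx.1, (div_lt_iff₀ pi_pos).2 hx.2⟩
  simp only [antiperExt, h_floor, mul_comm π]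

lemma antiperExt_eq_of_mem_Ico_zero {x : ℝ} (hx : x ∈ Ico 0 π) : antiperExt g x = g x := by
  simpa using antiperExt_eq_of_mem_Ico (g := g) (j := 0) (by simpa using hx)

lemma aestronglyMeasurable_antiperExt (hg : AEStronglyMeasurable g (volume.restrict (Ioo 0 π))) :
    AEStronglyMeasurable (antiperExt g) volume := by
  rw [Measure.restrict_congr_set Ioo_ae_eq_Ico] at hg
  rw [← Measure.restrict_univ (μ := volume), ← iUnion_Ico_zsmul pi_pos,
    aestronglyMeasurable_iUnion_iff]
  intro j
  simp only [zsmul_eq_mul, Int.cast_add, Int.cast_one]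
  have h_shift : MeasurePreserving (· - j * π) (volume.restrict (Ico (j * π) ((j + 1) * π)))
      (volume.restrict (Ico 0 π)) := by
    have := (measurePreserving_sub_right volume (j * π)).restrict_preimage
      (measurableSet_Ico (a := 0) (b := π))
    rwa [preimage_sub_const_Ico, zero_add, add_comm π, ← add_one_mul] at this
  refine ((hg.comp_measurePreserving h_shift).const_mul ((-1 : ℝ) ^ j)).congr ?_
  filter_upwards [ae_restrict_mem measurableSet_Ico] with x hx
  exact (antiperExt_eq_of_mem_Ico hx).symm

lemma intervalIntegrable_antiperExt_sq (hg : IntegrableOn (fun x => g x ^ 2) (Ioo 0 π)) (a b : ℝ) :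
    IntervalIntegrable (fun x => antiperExt g x ^ 2) volume a b := by
  refine (antiperExt_sq_periodic g).intervalIntegrable₀ pi_ne_zero ?_ a b
  rw [intervalIntegrable_iff_integrableOn_Ioo_of_le pi_pos.le]
  exact hg.congr_fun (fun x hx => by rw [antiperExt_eq_of_mem_Ico_zero (Ioo_subset_Ico_self hx)])
    measurableSet_Ioo

lemma integral_antiperExt_sq_of_le_pi {t : ℝ} (ht₀ : 0 ≤ t) (ht : t ≤ π) :
    ∫ x in (0:ℝ)..t, antiperExt g x ^ 2 = ∫ x in Ioo 0 t, g x ^ 2 := by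
  rw [integral_of_le ht₀, integral_Ioc_eq_integral_Ioo]
  exact setIntegral_congr_fun measurableSet_Ioo fun x hx => by
    rw [antiperExt_eq_of_mem_Ico_zero ⟨hx.1.le, hx.2.trans_le ht⟩]

end antiperExt

section Tk

variable {k : ℕ} {g : ℝ → ℝ}

lemma Tk_eq_comp_smul (k : ℕ) (g : ℝ → ℝ) : Tk k g = antiperExt g ∘ (((k : ℝ) / 2) • ·) := by
  ext x
  simp only [Tk, Function.comp_apply, smul_eq_mul]
  ring_nf

lemma aestronglyMeasurable_Tk (hk : k ≠ 0)
    (hg : AEStronglyMeasurable g (volume.restrict (Ioo 0 π))) :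
    AEStronglyMeasurable (Tk k g) (volume.restrict (Ioo 0 π)) := by
  rw [Tk_eq_comp_smul]
  exact ((aestronglyMeasurable_antiperExt hg).comp_quasiMeasurePreserving
    (Measure.quasiMeasurePreserving_smul volume (by positivity))).restrict

lemma integral_Tk_sq (hk : k ≠ 0) :
    ∫ x in Ioo 0 π, Tk k g x ^ 2 = 2 / k * ∫ y in (0:ℝ)..k / 2 * π, antiperExt g y ^ 2 := by
  rw [← integral_Ioc_eq_integral_Ioo, ← integral_of_le pi_pos.le, Tk_eq_comp_smul]
  simp only [Function.comp_apply, smul_eq_mul]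
  rw [integral_comp_mul_left (fun y => antiperExt g y ^ 2) (by positivity), mul_zero,
    inv_div, smul_eq_mul]

lemma integrableOn_Tk_sq (hk : k ≠ 0) (hg : IntegrableOn (fun x => g x ^ 2) (Ioo 0 π)) :
    IntegrableOn (fun x => Tk k g x ^ 2) (Ioo 0 π) := by
  rw [← intervalIntegrable_iff_integrableOn_Ioo_of_le pi_pos.le, Tk_eq_comp_smul]
  have h := (intervalIntegrable_antiperExt_sq hg 0 (k / 2 * π)).comp_mul_left (c := (k : ℝ) / 2)
  rwa [zero_div, mul_div_cancel_left₀ _ (by positivity)] at h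

lemma memLp_Tk (hk : k ≠ 0) (hg : MemLp g 2 (volume.restrict (Ioo 0 π))) :
    MemLp (Tk k g) 2 (volume.restrict (Ioo 0 π)) :=
  (memLp_two_iff_integrable_sq (aestronglyMeasurable_Tk hk hg.1)).2
    (integrableOn_Tk_sq hk ((memLp_two_iff_integrable_sq hg.1).1 hg))

lemma L2normSq_Tk_eq (hk : k ≠ 0) (hg : IntegrableOn (fun x => g x ^ 2) (Ioo 0 π)) {m : ℕ}
    {t : ℝ} (hkmt : k / 2 * π = m * π + t) (ht₀ : 0 ≤ t) (ht : t ≤ π) :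
    L2normSq (Tk k g) = 2 / k * (m * L2normSq g + ∫ x in Ioo 0 t, g x ^ 2) := by
  rw [L2normSq, integral_Tk_sq hk, hkmt, ← nsmul_eq_mul,
    (antiperExt_sq_periodic g).intervalIntegral_nsmul_add (intervalIntegrable_antiperExt_sq hg),
    nsmul_eq_mul, integral_antiperExt_sq_of_le_pi pi_pos.le le_rfl,
    integral_antiperExt_sq_of_le_pi ht₀ ht, L2normSq]

lemma L2normSq_Tk_two_mul {m : ℕ} (hm : m ≠ 0) (hg : IntegrableOn (fun x => g x ^ 2) (Ioo 0 π)) :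
    L2normSq (Tk (2 * m) g) = L2normSq g := by
  rw [L2normSq_Tk_eq (by positivity) hg (m := m) (t := 0) (by push_cast; ring) le_rfl pi_pos.le,
    Ioo_self, setIntegral_empty, add_zero]
  push_cast
  field_simp

lemma L2normSq_Tk_two_mul_add_one (m : ℕ) (hg : IntegrableOn (fun x => g x ^ 2) (Ioo 0 π)) :
    L2normSq (Tk (2 * m + 1) g)
      = 2 / (2 * m + 1) * (m * L2normSq g + ∫ x in Ioo 0 (π / 2), g x ^ 2) := by
  rw [L2normSq_Tk_eq (by positivity) hg (m := m) (t := π / 2) (by push_cast; ring)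
    (by positivity) (by linarith [pi_pos])]
  push_cast
  rfl

lemma L2normSq_Tk_two_mul_add_one_le (m : ℕ) (hg : IntegrableOn (fun x => g x ^ 2) (Ioo 0 π)) :
    L2normSq (Tk (2 * m + 1) g) ≤ (1 + 1 / (2 * m + 1)) * L2normSq g := by
  have h_half : ∫ x in Ioo 0 (π / 2), g x ^ 2 ≤ L2normSq g :=
    setIntegral_mono_set hg (.of_forall fun x => sq_nonneg _)
      (Ioo_subset_Ioo_right (by linarith [pi_pos])).eventuallyLE
  calc L2normSq (Tk (2 * m + 1) g)
      ≤ 2 / (2 * m + 1) * (m * L2normSq g + L2normSq g) := by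
        rw [L2normSq_Tk_two_mul_add_one m hg]; gcongr
    _ = (1 + 1 / (2 * m + 1)) * L2normSq g := by field_simp; ring

end Tk

lemma integral_indicator_Ioo_half_sq {s : Set ℝ} (h : Ioo 0 (π / 2) ⊆ s) :
    ∫ x in s, (Ioo 0 (π / 2)).indicator 1 x ^ 2 = π / 2 := by
  have h_sq : (fun x => (Ioo 0 (π / 2)).indicator (1 : ℝ → ℝ) x ^ 2)
      = (Ioo 0 (π / 2)).indicator 1 := by
    ext x; by_cases hx : x ∈ Ioo 0 (π / 2) <;> simp [hx]
  rw [h_sq, setIntegral_indicator measurableSet_Ioo, inter_eq_right.2 h]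
  simp [Real.volume_real_Ioo_of_le (by positivity : (0:ℝ) ≤ π / 2)]

theorem Tk_bounded_linear_opNorm (k : ℕ) (hk : 1 ≤ k) :
    (∀ g h : ℝ → ℝ, ∀ x : ℝ, Tk k (fun y => g y + h y) x = Tk k g x + Tk k h x) ∧
    (∀ (r : ℝ) (g : ℝ → ℝ) (x : ℝ), Tk k (fun y => r * g y) x = r * Tk k g x) ∧
    (∀ g : ℝ → ℝ, MeasureTheory.MemLp g 2 (MeasureTheory.volume.restrict (Ioo (0:ℝ) π)) →
      MeasureTheory.MemLp (Tk k g) 2 (MeasureTheory.volume.restrict (Ioo (0:ℝ) π))) ∧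
    IsLUB {r : ℝ | ∃ g : ℝ → ℝ,
        MeasureTheory.MemLp g 2 (MeasureTheory.volume.restrict (Ioo (0:ℝ) π)) ∧
        L2normSq g ≠ 0 ∧
        r = Real.sqrt (L2normSq (Tk k g)) / Real.sqrt (L2normSq g)}
      (if Even k then 1 else Real.sqrt (1 + 1/(k:ℝ))) := by
  have hk0 : k ≠ 0 := by omega
  have h_sq : ∀ g : ℝ → ℝ, MemLp g 2 (volume.restrict (Ioo 0 π)) →
      IntegrableOn (fun x => g x ^ 2) (Ioo 0 π) := fun g hg =>
    (memLp_two_iff_integrable_sq hg.1).1 hg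
  set e : ℝ → ℝ := (Ioo 0 (π / 2)).indicator 1
  have he : MemLp e 2 (volume.restrict (Ioo 0 π)) := (memLp_const 1).indicator measurableSet_Ioo
  have he_norm : L2normSq e = π / 2 := integral_indicator_Ioo_half_sq
    (Ioo_subset_Ioo_right (by linarith [pi_pos]))
  refine ⟨fun g h x => by simp only [Tk, antiperExt, mul_add],
    fun r g x => by simp only [Tk, antiperExt]; ring, fun g hg => memLp_Tk hk0 hg, ?_⟩
  rcases Nat.even_or_odd' k with ⟨m, rfl | rfl⟩
  · have hm : m ≠ 0 := by omega
    rw [if_pos (even_two_mul m), ← Real.sqrt_one]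
    refine isLUB_sqrt_div_sqrt (fun g hg => (L2normSq_Tk_two_mul hm (h_sq g hg)).trans_le
      (one_mul _).ge) he (by rw [he_norm]; positivity) ?_
    rw [L2normSq_Tk_two_mul hm (h_sq e he), one_mul]
  · rw [if_neg (Nat.not_even_two_mul_add_one m)]
    push_cast
    refine isLUB_sqrt_div_sqrt (fun g hg => L2normSq_Tk_two_mul_add_one_le m (h_sq g hg)) he
      (by rw [he_norm]; positivity) ?_
    rw [L2normSq_Tk_two_mul_add_one m (h_sq e he), he_norm,
      integral_indicator_Ioo_half_sq subset_rfl]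
    field_simp
    ring
end
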